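/- arXiv:2509.12396 — 3 statements merged into one kernel-verified Lean document; each statement's English description precedes it below -/
import Mathlib

section
/- Let a ∈ (0,1) and p,q,r ∈ (0,1) with p > 1/2, r > 1/2, and σ⁻¹(q)² < σ⁻¹(p)·σ⁻¹(r). Define R(K₁,K₂,K₃) = a²(log(1+e^{K₁}) - p·K₁) + 2a(1-a)(log(1+e^{K₂}) - q·K₂) + (1-a)²(log(1+e^{K₃}) - r·K₃). Then the point (σ⁻¹(p), σ⁻¹(q), σ⁻¹(r)) lies in the set C = {(K₁,K₂,K₃) : K₁ ≥ 0, K₃ ≥ 0, K₂² ≤ K₁K₃} and is the unique global minimizer of R over C. -/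
noncomputable def logit (x : ℝ) : ℝ := Real.log x - Real.log (1 - x)

noncomputable def risk (a p q r K₁ K₂ K₃ : ℝ) : ℝ :=
  a^2 * (Real.log (1 + Real.exp K₁) - p * K₁)
  + 2 * a * (1 - a) * (Real.log (1 + Real.exp K₂) - q * K₂)
  + (1 - a)^2 * (Real.log (1 + Real.exp K₃) - r * K₃)

def psdCone : Set (ℝ × ℝ × ℝ) := {K | 0 ≤ K.1 ∧ 0 ≤ K.2.2 ∧ K.2.1^2 ≤ K.1 * K.2.2}

lemma convex_exp_aux {s t : ℝ} (hs : 0 < s) (hs1 : s < 1) (ht : t ≠ 0) :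
    s * t < Real.log ((1 - s) + s * Real.exp t) := by
  have h := strictConvexOn_exp.2 (Set.mem_univ (0:ℝ)) (Set.mem_univ t) (Ne.symm ht)
    (by linarith : (0:ℝ) < 1 - s) hs (by ring)
  simp only [smul_eq_mul, mul_zero, zero_add, Real.exp_zero, mul_one] at h
  have hpos : 0 < (1 - s) + s * Real.exp t :=
    add_pos (by linarith) (by positivity)
  exact (Real.lt_log_iff_exp_lt hpos).2 h

lemma term_strict {s K : ℝ} (hs : 0 < s) (hs1 : s < 1) (hK : K ≠ logit s) :
    Real.log (1 + Real.exp (logit s)) - s * logit s <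
      Real.log (1 + Real.exp K) - s * K := by
  have h1s : (0:ℝ) < 1 - s := by linarith
  have hexp : Real.exp (logit s) = s / (1 - s) := by
    rw [logit, Real.exp_sub, Real.exp_log hs, Real.exp_log h1s]
  have h0 : 1 + Real.exp (logit s) = 1 / (1 - s) := by
    rw [hexp]; field_simp; ring
  set t := K - logit s with htdef
  have ht : t ≠ 0 := sub_ne_zero.2 hK
  have hKt : K = logit s + t := by ring
  have hexpK : Real.exp K = (s / (1 - s)) * Real.exp t := by
    rw [hKt, Real.exp_add, hexp]
  have key := convex_exp_aux hs hs1 ht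
  have heq : (1 - s) + s * Real.exp t = (1 - s) * (1 + Real.exp K) := by
    rw [hexpK]; field_simp
  rw [heq, Real.log_mul (by linarith) (by positivity)] at key
  have hst : s * t = s * K - s * logit s := by rw [htdef]; ring
  rw [h0, Real.log_div one_ne_zero (by linarith), Real.log_one]
  linarith

lemma term_le {s K : ℝ} (hs : 0 < s) (hs1 : s < 1) :
    Real.log (1 + Real.exp (logit s)) - s * logit s ≤
      Real.log (1 + Real.exp K) - s * K := by
  by_cases h : K = logit s
  · rw [h]
  · exact le_of_lt (term_strict hs hs1 h)

theorem dense_regime_unique_min (a p q r : ℝ)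
    (ha : a ∈ Set.Ioo (0:ℝ) 1)
    (hp : p ∈ Set.Ioo (0:ℝ) 1) (hq : q ∈ Set.Ioo (0:ℝ) 1) (hr : r ∈ Set.Ioo (0:ℝ) 1)
    (hp2 : 1/2 < p) (hr2 : 1/2 < r)
    (hdense : (logit q)^2 < logit p * logit r) :
    (logit p, logit q, logit r) ∈ psdCone ∧
    ∀ K ∈ psdCone, K ≠ (logit p, logit q, logit r) →
      risk a p q r (logit p) (logit q) (logit r) < risk a p q r K.1 K.2.1 K.2.2 := by
  obtain ⟨ha0, ha1⟩ := ha
  obtain ⟨hp0, hp1⟩ := hp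
  obtain ⟨hq0, hq1⟩ := hq
  obtain ⟨hr0, hr1⟩ := hr
  have hlp : 0 ≤ logit p := by
    have : Real.log (1 - p) < Real.log p := Real.log_lt_log (by linarith) (by linarith)
    unfold logit; linarith
  have hlr : 0 ≤ logit r := by
    have : Real.log (1 - r) < Real.log r := Real.log_lt_log (by linarith) (by linarith)
    unfold logit; linarith
  refine ⟨⟨hlp, hlr, le_of_lt hdense⟩, ?_⟩
  rintro ⟨K₁, K₂, K₃⟩ _ hne
  have ca : 0 < a^2 := by positivity
  have cb : 0 < 2 * a * (1 - a) := by nlinarith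
  have cc : 0 < (1 - a)^2 := by nlinarith
  have h1 := term_le (K := K₁) hp0 hp1
  have h2 := term_le (K := K₂) hq0 hq1
  have h3 := term_le (K := K₃) hr0 hr1
  unfold risk
  by_cases e1 : K₁ = logit p
  · by_cases e2 : K₂ = logit q
    · have e3 : K₃ ≠ logit r := by
        intro e3; exact hne (by simp [e1, e2, e3])
      have := term_strict hr0 hr1 e3
      nlinarith [mul_le_mul_of_nonneg_left h1 (le_of_lt ca),
        mul_le_mul_of_nonneg_left h2 (le_of_lt cb),
        mul_lt_mul_of_pos_left this cc]
    · have := term_strict hq0 hq1 e2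
      nlinarith [mul_le_mul_of_nonneg_left h1 (le_of_lt ca),
        mul_lt_mul_of_pos_left this cb,
        mul_le_mul_of_nonneg_left h3 (le_of_lt cc)]
  · have := term_strict hp0 hp1 e1
    nlinarith [mul_lt_mul_of_pos_left this ca,
      mul_le_mul_of_nonneg_left h2 (le_of_lt cb),
      mul_le_mul_of_nonneg_left h3 (le_of_lt cc)]
end

section
/- Let a ∈ (0,1) and p,q,r ∈ (0,1) with p ≤ 1/2, r ≤ 1/2, and (1/2-q)² ≤ (1/2-p)(1/2-r). Define R(K₁,K₂,K₃) = a²(log(1+e^{K₁}) - p·K₁) + 2a(1-a)(log(1+e^{K₂}) - q·K₂) + (1-a)²(log(1+e^{K₃}) - r·K₃). Then for every (K₁,K₂,K₃) with K₁ ≥ 0, K₃ ≥ 0, K₂² ≤ K₁K₃, we have R(K₁,K₂,K₃) ≥ R(0,0,0); i.e., the origin is a global minimizer of R over the PSD cone. -/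
theorem Real.log_two_add_half_le_log_one_add_exp (K : ℝ) :
    Real.log 2 + K / 2 ≤ Real.log (1 + Real.exp K) := by
  have hsq : Real.exp K = Real.exp (K / 2) ^ 2 := by
    rw [sq, ← Real.exp_add, add_halves]
  have hamgm : 2 * Real.exp (K / 2) ≤ 1 + Real.exp K := by
    nlinarith [sq_nonneg (1 - Real.exp (K / 2))]
  calc Real.log 2 + K / 2 = Real.log (2 * Real.exp (K / 2)) := by
        rw [Real.log_mul two_ne_zero (Real.exp_ne_zero _), Real.log_exp]
    _ ≤ Real.log (1 + Real.exp K) := Real.log_le_log (by positivity) hamgm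

/-- The trace pairing of the positive semidefinite matrices `[[α, β/2], [β/2, γ]]` and
`[[x, y], [y, z]]`. -/
theorem psd_trace_pairing_nonneg {α β γ x y z : ℝ} (hα : 0 ≤ α) (hγ : 0 ≤ γ)
    (hβ : β ^ 2 ≤ 4 * α * γ) (hx : 0 ≤ x) (hz : 0 ≤ z) (hy : y ^ 2 ≤ x * z) :
    0 ≤ α * x + β * y + γ * z := by
  by_contra! h
  have hprod : β ^ 2 * y ^ 2 ≤ 4 * α * γ * (x * z) :=
    mul_le_mul hβ hy (sq_nonneg y) (by positivity)
  nlinarith [sq_nonneg (α * x - γ * z), mul_nonneg hα hx, mul_nonneg hγ hz]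

theorem risk_sub_risk_zero_ge {a : ℝ} (ha₀ : 0 ≤ a) (ha₁ : a ≤ 1) (p q r K₁ K₂ K₃ : ℝ) :
    a ^ 2 * (1 / 2 - p) * K₁ + 2 * a * (1 - a) * (1 / 2 - q) * K₂
        + (1 - a) ^ 2 * (1 / 2 - r) * K₃
      ≤ risk a p q r K₁ K₂ K₃ - risk a p q r 0 0 0 := by
  have h₁ := mul_le_mul_of_nonneg_left (Real.log_two_add_half_le_log_one_add_exp K₁)
    (sq_nonneg a)
  have h₂ := mul_le_mul_of_nonneg_left (Real.log_two_add_half_le_log_one_add_exp K₂)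
    (by positivity : 0 ≤ 2 * a * (1 - a))
  have h₃ := mul_le_mul_of_nonneg_left (Real.log_two_add_half_le_log_one_add_exp K₃)
    (sq_nonneg (1 - a))
  simp only [risk, Real.exp_zero, one_add_one_eq_two, mul_zero, sub_zero]
  linarith

theorem sparse_regime_origin_min_general (a p q r : ℝ)
    (ha : a ∈ Set.Ioo (0:ℝ) 1)
    (hp2 : p ≤ 1/2) (hr2 : r ≤ 1/2)
    (hsparse : (1/2 - q)^2 ≤ (1/2 - p) * (1/2 - r)) :
    ∀ K₁ K₂ K₃ : ℝ, 0 ≤ K₁ → 0 ≤ K₃ → K₂^2 ≤ K₁ * K₃ →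
      risk a p q r 0 0 0 ≤ risk a p q r K₁ K₂ K₃ := by
  intro K₁ K₂ K₃ hK₁ hK₃ hK₂
  obtain ⟨ha₀, ha₁⟩ := ha
  have hα : 0 ≤ a ^ 2 * (1 / 2 - p) := mul_nonneg (sq_nonneg a) (by linarith)
  have hγ : 0 ≤ (1 - a) ^ 2 * (1 / 2 - r) := mul_nonneg (sq_nonneg _) (by linarith)
  have hβ : (2 * a * (1 - a) * (1 / 2 - q)) ^ 2
      ≤ 4 * (a ^ 2 * (1 / 2 - p)) * ((1 - a) ^ 2 * (1 / 2 - r)) := by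
    have := mul_le_mul_of_nonneg_left hsparse (by positivity : 0 ≤ 4 * (a * (1 - a)) ^ 2)
    linarith
  have hpairing := psd_trace_pairing_nonneg hα hγ hβ hK₁ hK₃ hK₂
  have hlinear := risk_sub_risk_zero_ge ha₀.le ha₁.le p q r K₁ K₂ K₃
  linarith

theorem sparse_regime_origin_min (a p q r : ℝ)
    (ha : a ∈ Set.Ioo (0:ℝ) 1)
    (hp : p ∈ Set.Ioo (0:ℝ) 1) (hq : q ∈ Set.Ioo (0:ℝ) 1) (hr : r ∈ Set.Ioo (0:ℝ) 1)
    (hp2 : p ≤ 1/2) (hr2 : r ≤ 1/2)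
    (hsparse : (1/2 - q)^2 ≤ (1/2 - p) * (1/2 - r)) :
    ∀ K₁ K₂ K₃ : ℝ, 0 ≤ K₁ → 0 ≤ K₃ → K₂^2 ≤ K₁ * K₃ →
      risk a p q r 0 0 0 ≤ risk a p q r K₁ K₂ K₃ :=
  sparse_regime_origin_min_general a p q r ha hp2 hr2 hsparse
end

section
/- If K₂ = -√(K₁K₃) with K₁ > 0, K₃ > 0, μ ≥ 0, and the equation a(1-a)(σ(K₂) - q) = -μK₂ holds, then σ(-√(K₁K₃)) ≥ q; in particular √(K₁K₃) ≤ -σ⁻¹(q), and this is only possible if q < 1/2 (assuming σ⁻¹ is the logit function and q ∈ (0,1)). -/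
noncomputable def logistic (y : ℝ) : ℝ := Real.exp y / (1 + Real.exp y)
lemma one_add_exp_pos (y : ℝ) : (0:ℝ) < 1 + Real.exp y := by positivity

lemma logistic_pos (y : ℝ) : 0 < logistic y := by
  unfold logistic; positivity

lemma logistic_lt_one (y : ℝ) : logistic y < 1 := by
  unfold logistic
  rw [div_lt_one (one_add_exp_pos y)]
  linarith

lemma logit_logistic (y : ℝ) : logit (logistic y) = y := by
  unfold logit logistic
  have h1 : (0:ℝ) < 1 + Real.exp y := one_add_exp_pos y
  have h2 : 1 - Real.exp y / (1 + Real.exp y) = 1 / (1 + Real.exp y) := by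
    field_simp
    ring
  rw [h2, Real.log_div (Real.exp_ne_zero y) (ne_of_gt h1),
    Real.log_div one_ne_zero (ne_of_gt h1), Real.log_exp, Real.log_one]
  ring

lemma logit_mono {x y : ℝ} (hx : 0 < x) (hy : y < 1) (hxy : x ≤ y) :
    logit x ≤ logit y := by
  unfold logit
  have h1 : Real.log x ≤ Real.log y := Real.log_le_log hx hxy
  have h2 : Real.log (1 - y) ≤ Real.log (1 - x) :=
    Real.log_le_log (by linarith) (by linarith)
  linarith

theorem case2a_feasibility (a q K₁ K₃ μ : ℝ)
    (ha : a ∈ Set.Ioo (0:ℝ) 1) (hq : q ∈ Set.Ioo (0:ℝ) 1)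
    (hK₁ : 0 < K₁) (hK₃ : 0 < K₃) (hμ : 0 ≤ μ)
    (h : a * (1 - a) * (logistic (-Real.sqrt (K₁ * K₃)) - q)
          = -μ * (-Real.sqrt (K₁ * K₃))) :
    q ≤ logistic (-Real.sqrt (K₁ * K₃)) ∧
    Real.sqrt (K₁ * K₃) ≤ -logit q ∧
    q < 1/2 := by
  obtain ⟨ha0, ha1⟩ := ha
  obtain ⟨hq0, hq1⟩ := hq
  set s := Real.sqrt (K₁ * K₃) with hs
  have hspos : 0 < s := Real.sqrt_pos.mpr (mul_pos hK₁ hK₃)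
  have haa : 0 < a * (1 - a) := mul_pos ha0 (by linarith)
  have hrhs : 0 ≤ -μ * (-s) := by nlinarith
  have hqL : q ≤ logistic (-s) := by nlinarith [h]
  have hLhalf : logistic (-s) < 1/2 := by
    unfold logistic
    rw [div_lt_iff₀ (one_add_exp_pos (-s))]
    have : Real.exp (-s) < 1 := Real.exp_lt_one_iff.mpr (by linarith)
    linarith
  refine ⟨hqL, ?_, by linarith⟩
  have := logit_mono hq0 (logistic_lt_one (-s)) hqL
  rw [logit_logistic] at this
  linarith
end
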